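/- Let Φ ∈ ℝ^(m×N) satisfy the RIP_{p,2}: μ√(1-δ_s)‖u‖₂ ≤ ‖Φu‖_p ≤ μ√(1+δ_s)‖u‖₂ for all s-sparse u, with orders s, s', and s+s' and constants δ_s, δ_{s'}, δ_{s+s'}, for some 2 ≤ p < ∞ and μ > 0. Then for any u, v ∈ ℝ^N with ‖u‖₀ ≤ s, ‖v‖₀ ≤ s', disjoint supports, and ‖u‖₂ = ‖v‖₂ = 1, one has 2|⟨J(Φu), Φv⟩| ≤ μ² [(1+δ_s) + (p-1)(1+δ_{s'})t² - (1-δ_{s+s'})(1+t²)]/t for every t > 0, and hence |⟨J(Φu), Φv⟩| ≤ μ² √((δ_s+δ_{s+s'})((p-2) + (p-1)δ_{s'} + δ_{s+s'})). -/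

import Mathlib

/-- The `p`-norm on `ℝ^m`. -/
noncomputable def pNorm {m : ℕ} (p : ℝ) (x : Fin m → ℝ) : ℝ :=
  (∑ i, |x i| ^ p) ^ (1 / p)

/-- The normalized duality mapping of `ℓ_p^m`. -/
noncomputable def dualityMap {m : ℕ} (p : ℝ) (x : Fin m → ℝ) : Fin m → ℝ :=
  fun i => pNorm p x ^ (2 - p) * |x i| ^ (p - 1) * Real.sign (x i)

/-- The `ℓ₂` norm on `ℝ^N`. -/
noncomputable def l2Norm {N : ℕ} (u : Fin N → ℝ) : ℝ :=
  Real.sqrt (∑ i, u i ^ 2)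

/-- Near-decorrelation of disjointly supported sparse vectors under `RIP_{p,2}`
(Lemma 3 of the paper): for unit-norm `u` (`s`-sparse) and `v` (`s'`-sparse) with
disjoint supports, `2|⟨J(Φu), Φv⟩| ≤ μ²((1+δ_s) + (p-1)(1+δ_{s'})t² - (1-δ_{s+s'})(1+t²))/t`
for every `t > 0`, and hence
`|⟨J(Φu), Φv⟩| ≤ μ²√((δ_s+δ_{s+s'})((p-2) + (p-1)δ_{s'} + δ_{s+s'}))`. -/
theorem rip_decorrelation {m N : ℕ} (p : ℝ) (hp : 2 ≤ p) (μ : ℝ) (hμ : 0 < μ)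
    (s s' : ℕ) (δs δs' δss : ℝ)
    (hδs : δs ∈ Set.Ioo (0 : ℝ) 1) (hδs' : δs' ∈ Set.Ioo (0 : ℝ) 1)
    (hδss : δss ∈ Set.Ioo (0 : ℝ) 1)
    (Φ : Matrix (Fin m) (Fin N) ℝ)
    (hRIPs : ∀ u : Fin N → ℝ, Set.ncard {i | u i ≠ 0} ≤ s →
      μ * Real.sqrt (1 - δs) * l2Norm u ≤ pNorm p (Φ.mulVec u) ∧
      pNorm p (Φ.mulVec u) ≤ μ * Real.sqrt (1 + δs) * l2Norm u)
    (hRIPs' : ∀ u : Fin N → ℝ, Set.ncard {i | u i ≠ 0} ≤ s' →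
      μ * Real.sqrt (1 - δs') * l2Norm u ≤ pNorm p (Φ.mulVec u) ∧
      pNorm p (Φ.mulVec u) ≤ μ * Real.sqrt (1 + δs') * l2Norm u)
    (hRIPss : ∀ u : Fin N → ℝ, Set.ncard {i | u i ≠ 0} ≤ s + s' →
      μ * Real.sqrt (1 - δss) * l2Norm u ≤ pNorm p (Φ.mulVec u) ∧
      pNorm p (Φ.mulVec u) ≤ μ * Real.sqrt (1 + δss) * l2Norm u)
    (hsmooth : ∀ x y : Fin m → ℝ,
      pNorm p (x + y) ^ 2
        ≤ pNorm p x ^ 2 + 2 * (∑ i, dualityMap p x i * y i) + (p - 1) * pNorm p y ^ 2)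
    (u v : Fin N → ℝ)
    (hu : Set.ncard {i | u i ≠ 0} ≤ s) (hv : Set.ncard {i | v i ≠ 0} ≤ s')
    (hdisj : ∀ i, u i = 0 ∨ v i = 0)
    (hun : l2Norm u = 1) (hvn : l2Norm v = 1) :
    (∀ t : ℝ, 0 < t →
      2 * |∑ i, dualityMap p (Φ.mulVec u) i * Φ.mulVec v i|
        ≤ μ ^ 2 * ((1 + δs) + (p - 1) * (1 + δs') * t ^ 2 - (1 - δss) * (1 + t ^ 2)) / t) ∧
    |∑ i, dualityMap p (Φ.mulVec u) i * Φ.mulVec v i|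
      ≤ μ ^ 2 * Real.sqrt ((δs + δss) * ((p - 2) + (p - 1) * δs' + δss)) := by
  obtain ⟨hδs0, hδs1⟩ := hδs
  obtain ⟨hδs'0, hδs'1⟩ := hδs'
  obtain ⟨hδss0, hδss1⟩ := hδss
  set A := ∑ i, dualityMap p (Φ.mulVec u) i * Φ.mulVec v i with hAdef
  have hpN : ∀ x : Fin m → ℝ, 0 ≤ pNorm p x := fun x =>
    Real.rpow_nonneg (Finset.sum_nonneg fun i _ => Real.rpow_nonneg (abs_nonneg _) p) _
  have hsum_u : ∑ i, u i ^ 2 = 1 := by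
    have h := hun
    unfold l2Norm at h
    exact Real.sqrt_eq_one.mp h
  have hsum_v : ∑ i, v i ^ 2 = 1 := by
    have h := hvn
    unfold l2Norm at h
    exact Real.sqrt_eq_one.mp h
  -- sparsity of combinations
  have hsparse : ∀ c : ℝ, Set.ncard {i | (u + c • v) i ≠ 0} ≤ s + s' := by
    intro c
    have hsub : {i | (u + c • v) i ≠ 0} ⊆ {i | u i ≠ 0} ∪ {i | v i ≠ 0} := by
      intro i hi
      simp only [Set.mem_setOf_eq, Pi.add_apply, Pi.smul_apply, smul_eq_mul] at hi
      by_contra h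
      simp only [Set.mem_union, Set.mem_setOf_eq, not_or, not_not] at h
      exact hi (by rw [h.1, h.2]; ring)
    calc Set.ncard {i | (u + c • v) i ≠ 0}
        ≤ Set.ncard ({i | u i ≠ 0} ∪ {i | v i ≠ 0}) :=
          Set.ncard_le_ncard hsub (Set.toFinite _)
      _ ≤ Set.ncard {i | u i ≠ 0} + Set.ncard {i | v i ≠ 0} := Set.ncard_union_le _ _
      _ ≤ s + s' := add_le_add hu hv
  have hsparse' : ∀ c : ℝ, Set.ncard {i | (c • v) i ≠ 0} ≤ s' := by
    intro c
    refine le_trans (Set.ncard_le_ncard ?_ (Set.toFinite _)) hv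
    intro i hi
    simp only [Set.mem_setOf_eq, Pi.smul_apply, smul_eq_mul] at hi ⊢
    exact fun h => hi (by rw [h]; ring)
  have hl2_combo : ∀ c : ℝ, l2Norm (u + c • v) = Real.sqrt (1 + c ^ 2) := by
    intro c
    unfold l2Norm
    congr 1
    have hpt : ∀ i, (u + c • v) i ^ 2 = u i ^ 2 + c ^ 2 * v i ^ 2 := by
      intro i
      rcases hdisj i with h | h <;> simp [h] <;> ring
    rw [Finset.sum_congr rfl fun i _ => hpt i, Finset.sum_add_distrib, hsum_u,
      ← Finset.mul_sum, hsum_v, mul_one]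
  have hl2_smul : ∀ c : ℝ, l2Norm (c • v) = |c| := by
    intro c
    unfold l2Norm
    have : ∀ i, (c • v) i ^ 2 = c ^ 2 * v i ^ 2 := by intro i; simp; ring
    rw [Finset.sum_congr rfl fun i _ => this i, ← Finset.mul_sum, hsum_v, mul_one,
      Real.sqrt_sq_eq_abs]
  -- squared RIP bounds
  have hΦu_sq : pNorm p (Φ.mulVec u) ^ 2 ≤ μ ^ 2 * (1 + δs) := by
    have h := (hRIPs u hu).2
    rw [hun, mul_one] at h
    have h2 := pow_le_pow_left₀ (hpN _) h 2
    calc pNorm p (Φ.mulVec u) ^ 2 ≤ (μ * Real.sqrt (1 + δs)) ^ 2 := h2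
      _ = μ ^ 2 * (1 + δs) := by
          rw [mul_pow, Real.sq_sqrt (by linarith)]
  have hΦcv_sq : ∀ c : ℝ, pNorm p (Φ.mulVec (c • v)) ^ 2 ≤ μ ^ 2 * (1 + δs') * c ^ 2 := by
    intro c
    have h := (hRIPs' (c • v) (hsparse' c)).2
    rw [hl2_smul c] at h
    have h2 := pow_le_pow_left₀ (hpN _) h 2
    calc pNorm p (Φ.mulVec (c • v)) ^ 2 ≤ (μ * Real.sqrt (1 + δs') * |c|) ^ 2 := h2
      _ = μ ^ 2 * (1 + δs') * c ^ 2 := by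
          rw [mul_pow, mul_pow, Real.sq_sqrt (by linarith), sq_abs]
  have hΦcombo_sq : ∀ c : ℝ,
      μ ^ 2 * (1 - δss) * (1 + c ^ 2) ≤ pNorm p (Φ.mulVec (u + c • v)) ^ 2 := by
    intro c
    have h := (hRIPss (u + c • v) (hsparse c)).1
    rw [hl2_combo c] at h
    have hnn : 0 ≤ μ * Real.sqrt (1 - δss) * Real.sqrt (1 + c ^ 2) := by positivity
    have h2 := pow_le_pow_left₀ hnn h 2
    calc μ ^ 2 * (1 - δss) * (1 + c ^ 2)
        = (μ * Real.sqrt (1 - δss) * Real.sqrt (1 + c ^ 2)) ^ 2 := by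
          rw [mul_pow, mul_pow, Real.sq_sqrt (by linarith), Real.sq_sqrt (by positivity)]
      _ ≤ pNorm p (Φ.mulVec (u + c • v)) ^ 2 := h2
  -- key inequality
  have key : ∀ c : ℝ, μ ^ 2 * (1 - δss) * (1 + c ^ 2)
      ≤ μ ^ 2 * (1 + δs) + 2 * (c * A) + (p - 1) * (μ ^ 2 * (1 + δs') * c ^ 2) := by
    intro c
    have hmv : Φ.mulVec (u + c • v) = Φ.mulVec u + Φ.mulVec (c • v) := by
      rw [Matrix.mulVec_add]
    have hsm := hsmooth (Φ.mulVec u) (Φ.mulVec (c • v))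
    have hsum : (∑ i, dualityMap p (Φ.mulVec u) i * Φ.mulVec (c • v) i) = c * A := by
      rw [hAdef, Finset.mul_sum]
      refine Finset.sum_congr rfl fun i _ => ?_
      rw [Matrix.mulVec_smul]
      simp only [Pi.smul_apply, smul_eq_mul]
      ring
    rw [hsum] at hsm
    have h1 := hΦcombo_sq c
    rw [hmv] at h1
    have h2 := hΦcv_sq c
    have hp1 : (0:ℝ) ≤ p - 1 := by linarith
    nlinarith [mul_le_mul_of_nonneg_left h2 hp1]
  have part1 : ∀ t : ℝ, 0 < t →
      2 * |A| ≤ μ ^ 2 * ((1 + δs) + (p - 1) * (1 + δs') * t ^ 2 - (1 - δss) * (1 + t ^ 2)) / t := by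
    intro t ht
    rw [le_div_iff₀ ht]
    have k1 := key t
    have k2 := key (-t)
    rcases abs_cases A with ⟨h, _⟩ | ⟨h, _⟩ <;> rw [h] <;> nlinarith
  refine ⟨part1, ?_⟩
  set a := δs + δss with hadef
  set b := (p - 2) + (p - 1) * δs' + δss with hbdef
  have ha : 0 < a := by rw [hadef]; linarith
  have hb : 0 < b := by
    rw [hbdef]
    nlinarith
  set t0 := Real.sqrt (a / b) with ht0def
  have ht0 : 0 < t0 := Real.sqrt_pos.mpr (div_pos ha hb)
  have ht0sq : t0 ^ 2 = a / b := Real.sq_sqrt (le_of_lt (div_pos ha hb))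
  have hE : (1 + δs) + (p - 1) * (1 + δs') * t0 ^ 2 - (1 - δss) * (1 + t0 ^ 2) = 2 * a := by
    rw [ht0sq, hadef, hbdef]
    field_simp [show (p - 2) + (p - 1) * δs' + δss ≠ 0 from hb.ne']
    ring
  have hmain := part1 t0 ht0
  rw [hE] at hmain
  have hsab : Real.sqrt (a * b) * t0 = a := by
    rw [ht0def, ← Real.sqrt_mul (by positivity)]
    rw [show a * b * (a / b) = a ^ 2 by field_simp, Real.sqrt_sq ha.le]
  have hsq : Real.sqrt (a * b) = a / t0 := (eq_div_iff ht0.ne').mpr hsab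
  have hfin : μ ^ 2 * (2 * a) / t0 = 2 * (μ ^ 2 * Real.sqrt (a * b)) := by
    rw [hsq]
    field_simp
  rw [hfin] at hmain
  linarith
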